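/- arXiv:0810.4774 — 2 statements merged into one kernel-verified Lean document; each statement's English description precedes it below -/
import Mathlib

section
/- Let A be a commutative Noetherian ring, T ⊆ Spec A a subset stable under specialization, and M an A-module such that (a) Ass_A(M) ∩ T = ∅, (b) Supp_A(M) \ T is connected (in the sense that any two primes in it are joined by a chain p = p₀, p₁, …, p_s = q of primes in Supp_A(M) \ T together with primes P₁, …, P_s in Supp_A(M) \ T with p_{i-1} + p_i ⊆ P_i for all i), and (c) M_p is indecomposable as an A_p-module for every p ∈ Supp_A(M) \ T. Then M is indecomposable as an A-module. -/
set_option maxHeartbeats 1000000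
set_option synthInstance.maxHeartbeats 1000000

open CategoryTheory

/-- A module `M` is indecomposable if in any direct sum decomposition `M = M₁ ⊕ M₂`
one of the summands is zero. -/
def IsIndecomposableModule (A : Type) [CommRing A] (M : Type) [AddCommGroup M] [Module A M] :
    Prop :=
  ∀ N₁ N₂ : Submodule A M, IsCompl N₁ N₂ → N₁ = ⊥ ∨ N₂ = ⊥

section Aux

variable {A : Type} [CommRing A] {M : Type} [AddCommGroup M] [Module A M]

/-- The localization of a submodule is trivial iff the prime is not in its support. -/
lemma localized_eq_bot_iff_aux (p : PrimeSpectrum A) (N : Submodule A M) :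
    N.localized p.asIdeal.primeCompl = ⊥ ↔ p ∉ Module.support A N := by
  rw [Module.notMem_support_iff']
  constructor
  · intro h m
    have hmem : (IsLocalizedModule.mk' (LocalizedModule.mkLinearMap p.asIdeal.primeCompl M)
        (m : M) (1 : p.asIdeal.primeCompl)) ∈ N.localized p.asIdeal.primeCompl :=
      ⟨m, m.2, 1, rfl⟩
    rw [h, Submodule.mem_bot] at hmem
    obtain ⟨s, hs⟩ := (IsLocalizedModule.mk'_eq_zero' _ _).mp hmem
    exact ⟨(s : A), s.2, Subtype.ext (by simpa [Submonoid.smul_def] using hs)⟩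
  · intro h
    rw [eq_bot_iff]
    rintro x ⟨m, hm, s, rfl⟩
    obtain ⟨r, hr, hrm⟩ := h ⟨m, hm⟩
    rw [Submodule.mem_bot, IsLocalizedModule.mk'_eq_zero']
    refine ⟨⟨r, hr⟩, ?_⟩
    have := congrArg (Subtype.val) hrm
    simpa [Submonoid.smul_def] using this

/-- Localization preserves complementary pairs of submodules. -/
lemma isCompl_localized_aux (S : Submonoid A) {N₁ N₂ : Submodule A M} (h : IsCompl N₁ N₂) :
    IsCompl (N₁.localized S) (N₂.localized S) := by
  constructor
  · rw [disjoint_iff, eq_bot_iff]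
    rintro x ⟨hx₁, hx₂⟩
    obtain ⟨m, hm, s, rfl⟩ := hx₁
    obtain ⟨n, hn, t, hnt⟩ := hx₂
    obtain ⟨u, hu⟩ := (IsLocalizedModule.mk'_eq_mk'_iff _ n m t s).mp hnt
    -- hu : u • t • m = u • s • n
    have hz : (u : A) • (t : A) • m ∈ N₁ ⊓ N₂ := by
      constructor
      · exact N₁.smul_mem _ (N₁.smul_mem _ hm)
      · have : (u : A) • (t : A) • m = (u : A) • (s : A) • n := by
          simpa [Submonoid.smul_def] using hu
        rw [this]
        exact N₂.smul_mem _ (N₂.smul_mem _ hn)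
    rw [h.inf_eq_bot, Submodule.mem_bot] at hz
    rw [Submodule.mem_bot, IsLocalizedModule.mk'_eq_zero']
    exact ⟨u * t, by simpa [Submonoid.smul_def, mul_smul] using hz⟩
  · rw [codisjoint_iff, eq_top_iff]
    rintro x -
    obtain ⟨⟨m, s⟩, rfl⟩ := IsLocalizedModule.mk'_surjective S (LocalizedModule.mkLinearMap S M) x
    have hm : m ∈ N₁ ⊔ N₂ := by rw [h.sup_eq_top]; trivial
    obtain ⟨m₁, hm₁, m₂, hm₂, rfl⟩ := Submodule.mem_sup.mp hm
    rw [Function.uncurry_apply_pair, IsLocalizedModule.mk'_add]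
    exact Submodule.add_mem_sup ⟨m₁, hm₁, s, rfl⟩ ⟨m₂, hm₂, s, rfl⟩

/-- Supports of modules are stable under specialization. -/
lemma support_stable_aux {N : Type} [AddCommGroup N] [Module A N] {p q : PrimeSpectrum A}
    (hpq : p.asIdeal ≤ q.asIdeal) (h : p ∈ Module.support A N) : q ∈ Module.support A N := by
  rw [Module.mem_support_iff'] at h ⊢
  obtain ⟨m, hm⟩ := h
  exact ⟨m, fun r hr => hm r fun hrp => hr (hpq hrp)⟩

end Aux

/-- **Proposition 2.1.** Let `A` be Noetherian, `T ⊆ Spec A` stable under specialization, and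
`M` a module with (a) `Ass M ∩ T = ∅`, (b) `Supp M ∖ T` connected by chains of primes linked in
`Supp M ∖ T`, and (c) `M_p` indecomposable for all `p ∈ Supp M ∖ T`. Then `M` is indecomposable. -/
theorem indecomposable_of_connected_support {A : Type} [CommRing A] [IsNoetherianRing A]
    (T : Set (PrimeSpectrum A))
    (hT : ∀ p q : PrimeSpectrum A, p ≤ q → p ∈ T → q ∈ T)
    (M : Type) [AddCommGroup M] [Module A M]
    (ha : ∀ p : PrimeSpectrum A, p.asIdeal ∈ associatedPrimes A M → p ∉ T)
    (hb : ∀ p q : PrimeSpectrum A, p ∈ Module.support A M \ T → q ∈ Module.support A M \ T →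
      ∃ (s : ℕ) (c : Fin (s + 1) → PrimeSpectrum A) (P : Fin s → PrimeSpectrum A),
        c 0 = p ∧ c (Fin.last s) = q ∧
        (∀ i, c i ∈ Module.support A M \ T) ∧
        (∀ i : Fin s, P i ∈ Module.support A M \ T ∧
          (c i.castSucc).asIdeal ⊔ (c i.succ).asIdeal ≤ (P i).asIdeal))
    (hc : ∀ p : PrimeSpectrum A, p ∈ Module.support A M \ T →
      IsIndecomposableModule (Localization.AtPrime p.asIdeal)
        (LocalizedModule p.asIdeal.primeCompl M)) :
    IsIndecomposableModule A M := by
  intro N₁ N₂ hcompl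
  classical
  have suppM : Module.support A M = Module.support A N₁ ∪ Module.support A N₂ := by
    have h1 : Module.support A (M ⧸ N₁) = Module.support A N₂ :=
      (Submodule.quotientEquivOfIsCompl N₁ N₂ hcompl).support_eq
    rw [Module.support_of_exact (LinearMap.exact_subtype_mkQ N₁)
      (Submodule.injective_subtype N₁) (Submodule.mkQ_surjective N₁), h1]
  have key : ∀ p ∈ Module.support A M \ T,
      p ∉ Module.support A N₁ ∨ p ∉ Module.support A N₂ := by
    intro p hp
    rcases hc p hp (N₁.localized p.asIdeal.primeCompl) (N₂.localized p.asIdeal.primeCompl)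
        (isCompl_localized_aux _ hcompl) with h | h
    · exact Or.inl ((localized_eq_bot_iff_aux p N₁).mp h)
    · exact Or.inr ((localized_eq_bot_iff_aux p N₂).mp h)
  have final : ∀ N : Submodule A M,
      (∀ p ∈ Module.support A M \ T, p ∉ Module.support A N) → N = ⊥ := by
    intro N hN
    by_contra hbot
    have : Nontrivial N := Submodule.nontrivial_iff_ne_bot.mpr hbot
    obtain ⟨P, hP⟩ := associatedPrimes.nonempty A N
    have hPM : P ∈ associatedPrimes A M :=
      associatedPrimes.subset_of_injective (Submodule.injective_subtype N) hP
    have hprime : P.IsPrime := hP.isPrime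
    have hPsupp : (⟨P, hprime⟩ : PrimeSpectrum A) ∈ Module.support A N := by
      obtain ⟨_, x, hx⟩ := hP
      rw [Module.mem_support_iff_exists_annihilator]
      refine ⟨x, ?_⟩
      subst hx
      show _ ≤ ((⊥ : Submodule A N).colon {x}).radical
      rw [Submodule.bot_colon']
      exact Ideal.le_radical
    refine hN ⟨P, hprime⟩ ⟨?_, ha ⟨P, hprime⟩ hPM⟩ hPsupp
    exact Module.support_subset_of_injective N.subtype (Submodule.injective_subtype N) hPsupp
  by_cases h₁ : ∀ p ∈ Module.support A M \ T, p ∉ Module.support A N₁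
  · exact Or.inl (final N₁ h₁)
  · refine Or.inr (final N₂ ?_)
    push_neg at h₁
    obtain ⟨p, hp, hpN₁⟩ := h₁
    intro q hq hqN₂
    obtain ⟨s, c, P, hc0, hclast, hcmem, hPmem⟩ := hb p q hp hq
    have main : ∀ i : Fin (s + 1), c i ∈ Module.support A N₁ := by
      intro i
      induction i using Fin.induction with
      | zero => rw [hc0]; exact hpN₁
      | succ i ih =>
        have hPN₁ : P i ∈ Module.support A N₁ :=
          support_stable_aux (le_trans le_sup_left (hPmem i).2) ih
        rcases key (P i) (hPmem i).1 with h | h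
        · exact absurd hPN₁ h
        · have hcN₂ : c i.succ ∉ Module.support A N₂ := fun hmem =>
            h (support_stable_aux (le_trans le_sup_right (hPmem i).2) hmem)
          have hmem : c i.succ ∈ Module.support A M := (hcmem i.succ).1
          rw [suppM] at hmem
          exact hmem.resolve_right hcN₂
    have hqN₁ : q ∈ Module.support A N₁ := by rw [← hclast]; exact main (Fin.last s)
    rcases key q hq with h | h
    · exact h hqN₁
    · exact h hqN₂
end

section
/- Let A be a Noetherian ring, I an ideal, and M an A-module. Then the set of associated primes of the ideal transform satisfies Ass_A D_I(M) = Ass_A(M) \ V(I). -/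
set_option maxHeartbeats 1000000
set_option synthInstance.maxHeartbeats 1000000

open CategoryTheory


/-- The ideal transform `D_I(M) = colim_n Hom_A(Iⁿ, M)`. -/
noncomputable abbrev idealTransform (A : Type) [CommRing A] (I : Ideal A) (M : Type)
    [AddCommGroup M] [Module A M] : Type :=
  Module.DirectLimit (R := A) (ι := ℕ) (fun n => ↥(I ^ n) →ₗ[A] M)
    (fun _ _ h => LinearMap.lcomp A M (Submodule.inclusion (Ideal.pow_le_pow_right h)))

section Aux

variable {A : Type} [CommRing A] (I : Ideal A) {M : Type} [AddCommGroup M] [Module A M]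

/-- The transition maps of the directed system. -/
private noncomputable abbrev itF : ∀ (i j : ℕ), i ≤ j →
    ((↥(I ^ i) →ₗ[A] M) →ₗ[A] (↥(I ^ j) →ₗ[A] M)) :=
  fun _ _ h => LinearMap.lcomp A M (Submodule.inclusion (Ideal.pow_le_pow_right h))

private lemma itDirSys :
    DirectedSystem (fun n => ↥(I ^ n) →ₗ[A] M) (fun i j h => itF I i j h) := by
  constructor
  · intro i φ
    ext w
    simp only [itF, LinearMap.lcomp_apply]
    congr 1
  · intro k j i hij hjk φ
    ext w
    simp only [itF, LinearMap.lcomp_apply]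
    congr 1

/-- The canonical map into the ideal transform. -/
private noncomputable abbrev itOf (M : Type) [AddCommGroup M] [Module A M] (n : ℕ) :
    (↥(I ^ n) →ₗ[A] M) →ₗ[A] idealTransform A I M :=
  Module.DirectLimit.of A ℕ (fun n => ↥(I ^ n) →ₗ[A] M)
    (fun _ _ h => LinearMap.lcomp A M (Submodule.inclusion (Ideal.pow_le_pow_right h))) n

private lemma itOf_eq_zero_iff {n : ℕ} (φ : ↥(I ^ n) →ₗ[A] M) :
    itOf I M n φ = 0 ↔ ∃ m, ∃ hnm : n ≤ m,
      ∀ w : ↥(I ^ m), φ (Submodule.inclusion (Ideal.pow_le_pow_right hnm) w) = 0 := by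
  haveI := itDirSys (A := A) I (M := M)
  constructor
  · intro h
    obtain ⟨m, hnm, h0⟩ := Module.DirectLimit.of.zero_exact h
    exact ⟨m, hnm, fun w => DFunLike.congr_fun h0 w⟩
  · rintro ⟨m, hnm, h0⟩
    have : itOf I M n φ = itOf I M m (itF I n m hnm φ) :=
      (Module.DirectLimit.of_f (G := fun n => ↥(I ^ n) →ₗ[A] M)
        (f := fun _ _ h => LinearMap.lcomp A M (Submodule.inclusion (Ideal.pow_le_pow_right h)))
        (hij := hnm) (x := φ)).symm
    rw [this]
    convert map_zero (itOf I M m)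
    ext w
    exact h0 w

end Aux

/-- **Lemma 3.1(b).** For a Noetherian ring `A`, `Ass_A D_I(M) = Ass_A M ∖ V(I)`. -/
theorem associatedPrimes_idealTransform {A : Type} [CommRing A] [IsNoetherianRing A]
    (I : Ideal A) (M : Type) [AddCommGroup M] [Module A M] :
    associatedPrimes A (idealTransform A I M) =
      associatedPrimes A M \ {p : Ideal A | I ≤ p} := by
  classical
  ext p
  simp only [Set.mem_diff, Set.mem_setOf_eq, AssociatedPrimes.mem_iff, isAssociatedPrime_iff,
    Submodule.bot_colon']
  constructor
  · rintro ⟨hpp, x, hx⟩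
    obtain ⟨n, φ, rfl⟩ := Module.DirectLimit.exists_of x
    have hxann : ∀ r : A, r ∈ p ↔ r • (itOf I M n φ) = 0 := by
      intro r
      rw [hx]
      exact Submodule.mem_annihilator_span_singleton _ _
    -- First: `I` is not contained in `p`.
    have hIp : ¬ I ≤ p := by
      intro hIle
      obtain ⟨s, hs⟩ := (IsNoetherian.noetherian I : I.FG)
      have key : ∀ q ∈ s, ∃ m, ∃ hnm : n ≤ m, ∀ w : ↥(I ^ m),
          (q • φ) (Submodule.inclusion (Ideal.pow_le_pow_right hnm) w) = 0 := by
        intro q hq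
        have hqp : q ∈ p := hIle (hs ▸ Ideal.subset_span hq)
        have h0 : itOf I M n (q • φ) = 0 := by
          rw [map_smul]
          exact (hxann q).1 hqp
        exact (itOf_eq_zero_iff I _).1 h0
      choose! mf hmf h2 using key
      set m : ℕ := n ⊔ s.sup mf with hmdef
      have hnm : n ≤ m := le_sup_left
      have hx0 : itOf I M n φ = 0 := by
        rw [itOf_eq_zero_iff]
        refine ⟨m + 1, le_trans hnm (Nat.le_succ m), ?_⟩
        rintro ⟨z, hz⟩
        have hmn : I ^ m * I ≤ I ^ n := by
          rw [← pow_succ]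
          exact Ideal.pow_le_pow_right (le_trans hnm (Nat.le_succ m))
        have hz' : z ∈ I ^ m * I := by rwa [← pow_succ]
        have main : ∀ z (hz : z ∈ I ^ m * I), φ ⟨z, hmn hz⟩ = 0 := by
          intro z hz
          induction hz using Submodule.mul_induction_on' with
          | mem_mul_mem y hy a ha =>
            have hyn : y ∈ I ^ n := Ideal.pow_le_pow_right hnm hy
            have harg : (⟨y * a, hmn (Submodule.mul_mem_mul hy ha)⟩ : ↥(I ^ n))
                = a • (⟨y, hyn⟩ : ↥(I ^ n)) := by
              ext
              simp [smul_eq_mul, mul_comm]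
            rw [harg, map_smul]
            have hker0 : Submodule.span A (↑s : Set A) ≤
                LinearMap.ker (LinearMap.toSpanSingleton A M (φ ⟨y, hyn⟩)) := by
              refine Submodule.span_le.2 ?_
              intro q hq
              rw [Finset.mem_coe] at hq
              have hq2 := h2 q hq ⟨y, Ideal.pow_le_pow_right
                (le_trans (Finset.le_sup hq) le_sup_right) hy⟩
              rw [LinearMap.smul_apply] at hq2
              simp only [SetLike.mem_coe, LinearMap.mem_ker, LinearMap.toSpanSingleton_apply]
              exact hq2
            have hker : I ≤ LinearMap.ker (LinearMap.toSpanSingleton A M (φ ⟨y, hyn⟩)) :=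
              hs ▸ hker0
            have := hker ha
            rwa [LinearMap.mem_ker, LinearMap.toSpanSingleton_apply] at this
          | add z1 hz1 z2 hz2 ih1 ih2 =>
            have harg : (⟨z1 + z2, hmn (add_mem hz1 hz2)⟩ : ↥(I ^ n))
                = ⟨z1, hmn hz1⟩ + ⟨z2, hmn hz2⟩ := rfl
            rw [harg, map_add, ih1, ih2, add_zero]
        exact main z hz'
      refine hpp.ne_top ?_
      rw [hx, hx0, Submodule.span_zero_singleton, Submodule.annihilator_bot]
    -- Now produce the associated prime of `M`.
    obtain ⟨a, haI, hap⟩ := SetLike.not_le_iff_exists.1 hIp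
    obtain ⟨s, hs⟩ := (IsNoetherian.noetherian p : p.FG)
    have key : ∀ q ∈ s, ∃ m, ∃ hnm : n ≤ m, ∀ w : ↥(I ^ m),
        (q • φ) (Submodule.inclusion (Ideal.pow_le_pow_right hnm) w) = 0 := by
      intro q hq
      have hqp : q ∈ p := hs ▸ Ideal.subset_span hq
      have h0 : itOf I M n (q • φ) = 0 := by
        rw [map_smul]
        exact (hxann q).1 hqp
      exact (itOf_eq_zero_iff I _).1 h0
    choose! mf hmf h2 using key
    set m : ℕ := n ⊔ s.sup mf with hmdef
    have hnm : n ≤ m := le_sup_left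
    have ham : a ^ m ∈ I ^ m := Ideal.pow_mem_pow haI m
    have hamn : a ^ m ∈ I ^ n := Ideal.pow_le_pow_right hnm ham
    refine ⟨⟨hpp, φ ⟨a ^ m, hamn⟩, ?_⟩, hIp⟩
    apply le_antisymm
    · refine le_trans (le_of_eq hs.symm) (Submodule.span_le.2 ?_)
      intro q hq
      rw [Finset.mem_coe] at hq
      rw [SetLike.mem_coe, Submodule.mem_annihilator_span_singleton]
      have hq2 := h2 q hq ⟨a ^ m, Ideal.pow_le_pow_right
        (le_trans (Finset.le_sup hq) le_sup_right) ham⟩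
      rw [LinearMap.smul_apply] at hq2
      exact hq2
    · intro r hr
      rw [Submodule.mem_annihilator_span_singleton] at hr
      have h0 : (r * a ^ m) • itOf I M n φ = 0 := by
        rw [← map_smul, itOf_eq_zero_iff]
        refine ⟨m, hnm, ?_⟩
        rintro ⟨y, hy⟩
        have hyn : y ∈ I ^ n := Ideal.pow_le_pow_right hnm hy
        have step : a ^ m • φ ⟨y, hyn⟩ = y • φ ⟨a ^ m, hamn⟩ := by
          rw [← map_smul, ← map_smul]
          congr 1
          ext
          simp [smul_eq_mul, mul_comm]
        show ((r * a ^ m) • φ) (⟨y, hyn⟩ : ↥(I ^ n)) = 0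
        rw [LinearMap.smul_apply, mul_smul, step, smul_comm, hr, smul_zero]
      have hmem : r * a ^ m ∈ p := (hxann _).2 h0
      rcases hpp.mem_or_mem hmem with h | h
      · exact h
      · exact absurd (hpp.mem_of_pow_mem _ h) hap
  · rintro ⟨⟨hpp, m₀, hm₀⟩, hIp⟩
    obtain ⟨a, haI, hap⟩ := SetLike.not_le_iff_exists.1 hIp
    set φ₀ : ↥(I ^ 0) →ₗ[A] M :=
      (LinearMap.toSpanSingleton A M m₀).comp (Submodule.subtype (I ^ 0)) with hφ₀
    refine ⟨hpp, itOf I M 0 φ₀, ?_⟩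
    ext r
    rw [Submodule.mem_annihilator_span_singleton, ← map_smul]
    constructor
    · intro hr
      have hrm : r • m₀ = 0 := by
        rw [hm₀] at hr
        exact (Submodule.mem_annihilator_span_singleton _ _).1 hr
      convert map_zero (itOf I M 0)
      ext w
      show r • ((w : A) • m₀) = 0
      rw [smul_comm, hrm, smul_zero]
    · intro h0
      rw [itOf_eq_zero_iff] at h0
      obtain ⟨m, hm, hw⟩ := h0
      have hv := hw ⟨a ^ m, Ideal.pow_mem_pow haI m⟩
      have hv' : (r * a ^ m) • m₀ = 0 := by
        rw [mul_smul]
        exact hv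
      have hmem : r * a ^ m ∈ p := by
        rw [hm₀]
        exact (Submodule.mem_annihilator_span_singleton _ _).2 hv'
      rcases hpp.mem_or_mem hmem with h | h
      · exact h
      · exact absurd (hpp.mem_of_pow_mem _ h) hap
end
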